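/- arXiv:1903.03876 — 3 statements merged into one kernel-verified Lean document; each statement's English description precedes it below -/
import Mathlib

section
/- Let k be a field and F₁, F₂ ∈ k[x₀,…,xₙ] coprime homogeneous polynomials of degree d. Fix a monomial ordering and let m ≥ 2d. Set B₁ = {F₁·xⁱ : |i| = m−d}, B₂ = {F₂·xⁱ : |i| = m−d}, B₁' = {F₁·TM(F₂)·xⁱ : |i| = m−2d}. Then B = (B₁ \ B₁') ∪ B₂ is a k-basis of the degree-m homogeneous part (F₁,F₂)ₘ of the ideal (F₁,F₂). -/
/-- A monomial ordering on `k[x]` for variables indexed by `σ`: a total order on exponent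
vectors which is compatible with multiplication of monomials (addition of exponent
vectors) and has the monomial `1` (the zero vector) as least element. -/
structure MonomialOrdering (σ : Type*) where
  le : (σ →₀ ℕ) → (σ →₀ ℕ) → Prop
  le_refl : ∀ a, le a a
  le_trans : ∀ a b c, le a b → le b c → le a c
  le_antisymm : ∀ a b, le a b → le b a → a = b
  le_total : ∀ a b, le a b ∨ le b a
  add_right : ∀ a b c, le a b → le (a + c) (b + c)
  zero_le : ∀ a, le 0 a

/-- `m` is the trailing monomial of `F`: the least monomial (exponent vector) appearing
in `F` with a nonzero coefficient, with respect to the monomial ordering `o`. -/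
def IsTrailingMonomial {σ k : Type*} [CommSemiring k] (o : MonomialOrdering σ)
    (F : MvPolynomial σ k) (m : σ →₀ ℕ) : Prop :=
  m ∈ F.support ∧ ∀ m' ∈ F.support, o.le m m'

open MvPolynomial

/-!
Since `F₁, F₂` are coprime, a syzygy `F₁ G₁ = F₂ G₂` forces `F₂ ∣ G₁`, so the trailing monomial
of `G₁` is divisible by `TM(F₂)`; hence no nonzero element of `F₁ ⟨xʲ : TM(F₂) ∤ xʲ⟩` lies in
`F₂ ⟨xⁱ⟩`, which gives linear independence. Conversely, `F₁ xʲ` with `TM(F₂) ∣ xʲ` is recovered,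
modulo `F₂ ⟨xⁱ⟩`, from the expansion of `F₁ F₂ xʲ / TM(F₂)`: all its other terms are `F₁ xʲ'` with
`xʲ'` larger than `xʲ`, so downward induction along the monomial ordering on the finitely many
monomials of degree `m - d` shows that `B` spans `F₁ k[x]_{m-d} + F₂ k[x]_{m-d} = (F₁, F₂)ₘ`.
-/

namespace MonomialOrdering

variable {σ : Type*} (o : MonomialOrdering σ)

def lt (a b : σ →₀ ℕ) : Prop := o.le a b ∧ a ≠ b

instance : IsStrictOrder (σ →₀ ℕ) o.lt where
  irrefl _ h := h.2 rfl
  trans _ _ _ hab hbc :=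
    ⟨o.le_trans _ _ _ hab.1 hbc.1, fun hac => hab.2 (o.le_antisymm _ _ hab.1 (hac ▸ hbc.1))⟩

variable {o}

theorem le_of_not_lt {a b : σ →₀ ℕ} (h : ¬ o.lt b a) : o.le a b := by
  by_cases hab : a = b
  · exact hab ▸ o.le_refl a
  · exact (o.le_total a b).resolve_right fun hba => h ⟨hba, Ne.symm hab⟩

theorem add_left {a b : σ →₀ ℕ} (c : σ →₀ ℕ) (h : o.le a b) : o.le (c + a) (c + b) := by
  simpa only [add_comm c] using o.add_right a b c h

theorem eq_and_eq_of_add_eq {a b c d : σ →₀ ℕ} (hac : o.le a c) (hbd : o.le b d)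
    (h : a + b = c + d) : a = c ∧ b = d := by
  have hcb : o.le (c + b) (a + b) := h ▸ add_left c hbd
  have hac' : a = c := add_right_cancel (o.le_antisymm _ _ (o.add_right a c b hac) hcb)
  exact ⟨hac', add_left_cancel (hac' ▸ h)⟩

theorem exists_isTrailingMonomial {k : Type*} [CommSemiring k] {F : MvPolynomial σ k}
    (hF : F ≠ 0) : ∃ t, IsTrailingMonomial o F t := by
  obtain ⟨s, hs⟩ := support_nonempty.2 hF
  obtain ⟨⟨t, ht⟩, -, hmin⟩ :=
    (F.support.finite_toSet.wellFoundedOn (r := o.lt)).has_min Set.univ ⟨⟨s, hs⟩, trivial⟩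
  exact ⟨t, ht, fun s hs => le_of_not_lt (hmin ⟨s, hs⟩ trivial)⟩

end MonomialOrdering

theorem IsTrailingMonomial.add_mem_support_mul {σ k : Type*} [CommSemiring k] [NoZeroDivisors k]
    {o : MonomialOrdering σ} {F G : MvPolynomial σ k} {s u : σ →₀ ℕ}
    (hF : IsTrailingMonomial o F s) (hG : IsTrailingMonomial o G u) :
    s + u ∈ (F * G).support := by
  classical
  rw [mem_support_iff, coeff_mul, Finset.sum_eq_single_of_mem (s, u) (by simp)]
  · exact mul_ne_zero (mem_support_iff.1 hF.1) (mem_support_iff.1 hG.1)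
  rintro ⟨a, b⟩ hab hne
  by_cases ha : a ∈ F.support
  · by_cases hb : b ∈ G.support
    · obtain ⟨rfl, rfl⟩ := MonomialOrdering.eq_and_eq_of_add_eq (hF.2 a ha) (hG.2 b hb)
        (Finset.HasAntidiagonal.mem_antidiagonal.1 hab).symm
      exact absurd rfl hne
    · rw [notMem_support_iff.1 hb, mul_zero]
  · rw [notMem_support_iff.1 ha, zero_mul]

section CommSemiring

variable {σ R : Type*} [CommSemiring R]

theorem MvPolynomial.IsHomogeneous.degree_eq_of_mem_support {F : MvPolynomial σ R} {d : ℕ}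
    (hF : F.IsHomogeneous d) {s : σ →₀ ℕ} (hs : s ∈ F.support) : s.degree = d :=
  (hF.degree_eq_sum_deg_support hs).symm

theorem MvPolynomial.IsHomogeneous.not_isUnit [Nontrivial R] {F : MvPolynomial σ R} {d : ℕ}
    (hF : F.IsHomogeneous d) (hd : 0 < d) : ¬ IsUnit F := fun h =>
  (h.map constantCoeff).ne_zero (hF.coeff_eq_zero (by rw [map_zero]; exact hd.ne))

attribute [local instance] MvPolynomial.gradedAlgebra in
theorem MvPolynomial.homogeneousComponent_mul_of_isHomogeneous {F : MvPolynomial σ R} {d m : ℕ}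
    (hF : F.IsHomogeneous d) (hdm : d ≤ m) (A : MvPolynomial σ R) :
    homogeneousComponent m (A * F) = homogeneousComponent (m - d) A * F := by
  have := DirectSum.coe_decompose_mul_of_right_mem (homogeneousSubmodule σ R) m (a := A) hF
  rw [if_pos hdm] at this
  rw [← decomposition.decompose'_apply, ← decomposition.decompose'_apply]
  exact this

theorem restrictScalars_span_pair_inf_homogeneousSubmodule {F₁ F₂ : MvPolynomial σ R} {d m : ℕ}
    (h₁ : F₁.IsHomogeneous d) (h₂ : F₂.IsHomogeneous d) (hdm : d ≤ m) :
    (Ideal.span {F₁, F₂}).restrictScalars R ⊓ homogeneousSubmodule σ R m =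
      (homogeneousSubmodule σ R (m - d)).map (LinearMap.mulLeft R F₁) ⊔
        (homogeneousSubmodule σ R (m - d)).map (LinearMap.mulLeft R F₂) := by
  have hm : d + (m - d) = m := Nat.add_sub_cancel' hdm
  apply le_antisymm
  · rintro p ⟨hpI, hpm⟩
    obtain ⟨A, C, rfl⟩ := Ideal.mem_span_pair.1 hpI
    rw [← homogeneousComponent_eq_self hpm, map_add,
      homogeneousComponent_mul_of_isHomogeneous h₁ hdm,
      homogeneousComponent_mul_of_isHomogeneous h₂ hdm, mul_comm, mul_comm _ F₂]
    exact Submodule.add_mem_sup ⟨_, homogeneousComponent_isHomogeneous _ _, rfl⟩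
      ⟨_, homogeneousComponent_isHomogeneous _ _, rfl⟩
  · refine sup_le ?_ ?_ <;> rintro _ ⟨G, hG, rfl⟩ <;>
      refine ⟨Ideal.mul_mem_right _ _ (Ideal.subset_span (by simp)), ?_⟩
    · exact hm ▸ h₁.mul hG
    · exact hm ▸ h₂.mul hG

end CommSemiring

section Field

variable {σ k : Type*} [Field k]

theorem span_image_mul_monomial (F : MvPolynomial σ k) (S : Set (σ →₀ ℕ)) :
    Submodule.span k ((F * monomial · 1) '' S) =
      (restrictSupport k S).map (LinearMap.mulLeft k F) := by
  rw [restrictSupport_eq_span, Submodule.map_span, ← Set.image_comp]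
  rfl

theorem linearIndepOn_mul_monomial {F : MvPolynomial σ k} (hF : F ≠ 0) (S : Set (σ →₀ ℕ)) :
    LinearIndepOn k id ((F * monomial · (1 : k)) '' S) := by
  have hinj : LinearMap.ker (LinearMap.mulLeft k F) = ⊥ :=
    LinearMap.ker_eq_bot.2 (mul_right_injective₀ hF)
  have := ((basisMonomials σ k).linearIndependent.map' _ hinj).linearIndepOn (s := S)
  rw [coe_basisMonomials] at this
  exact this.id_image

theorem disjoint_span_mul_monomial {o : MonomialOrdering σ} {F₁ F₂ : MvPolynomial σ k}
    (hcop : IsRelPrime F₁ F₂) {t : σ →₀ ℕ} (ht : IsTrailingMonomial o F₂ t)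
    {S₁ : Set (σ →₀ ℕ)} (hS₁ : ∀ j ∈ S₁, ¬ t ≤ j) (S₂ : Set (σ →₀ ℕ)) :
    Disjoint (Submodule.span k ((F₁ * monomial · 1) '' S₁))
      (Submodule.span k ((F₂ * monomial · 1) '' S₂)) := by
  rw [span_image_mul_monomial, span_image_mul_monomial, Submodule.disjoint_def]
  rintro _ ⟨G₁, hG₁, rfl⟩ ⟨G₂, -, hG₂⟩
  simp only [LinearMap.mulLeft_apply] at hG₂ ⊢
  obtain ⟨H, rfl⟩ : F₂ ∣ G₁ := hcop.symm.dvd_of_dvd_mul_left ⟨G₂, hG₂.symm⟩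
  by_contra hne
  obtain ⟨u, hu⟩ := MonomialOrdering.exists_isTrailingMonomial (o := o)
    (right_ne_zero_of_mul (right_ne_zero_of_mul hne))
  exact hS₁ _ (hG₁ (ht.add_mem_support_mul hu)) le_self_add

theorem mul_monomial_one_eq_sum (F : MvPolynomial σ k) (i : σ →₀ ℕ) :
    F * monomial i 1 = ∑ s ∈ F.support, F.coeff s • monomial (s + i) 1 := by
  conv_lhs => rw [F.as_sum]
  simp only [Finset.sum_mul, monomial_mul, mul_one, smul_monomial, smul_eq_mul]

theorem monomial_mem_of_isTrailingMonomial [Finite σ] {o : MonomialOrdering σ}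
    {F : MvPolynomial σ k} {d N : ℕ} (hF : F.IsHomogeneous d) {t : σ →₀ ℕ}
    (ht : IsTrailingMonomial o F t) (V : Submodule k (MvPolynomial σ k))
    (hmul : ∀ i : σ →₀ ℕ, i.degree + d = N → F * monomial i 1 ∈ V)
    (hmono : ∀ j : σ →₀ ℕ, j.degree = N → ¬ t ≤ j → monomial j 1 ∈ V)
    {j : σ →₀ ℕ} (hj : j.degree = N) : monomial j 1 ∈ V := by
  refine ((Finsupp.finite_of_degree_eq N).wellFoundedOn (r := Function.swap o.lt)).induction
    (P := fun j => monomial j 1 ∈ V) hj fun j hj ih => ?_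
  classical
  by_cases htj : t ≤ j
  swap
  · exact hmono j hj htj
  obtain ⟨i, rfl⟩ := le_iff_exists_add.1 htj
  have htd : t.degree = d := hF.degree_eq_of_mem_support ht.1
  have hdeg {s : σ →₀ ℕ} (hs : s ∈ F.support) : (s + i).degree = N := by
    rw [map_add, hF.degree_eq_of_mem_support hs, ← htd, ← map_add, hj]
  have hrest : ∀ s ∈ F.support.erase t, monomial (s + i) (1 : k) ∈ V := by
    intro s hs
    have hst : t ≠ s := (Finset.ne_of_mem_erase hs).symm
    exact ih _ (hdeg (Finset.mem_of_mem_erase hs))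
      ⟨o.add_right t s i (ht.2 s (Finset.mem_of_mem_erase hs)), fun h => hst (add_right_cancel h)⟩
  have hlead : F.coeff t • monomial (t + i) (1 : k) =
      F * monomial i 1 - ∑ s ∈ F.support.erase t, F.coeff s • monomial (s + i) 1 := by
    rw [mul_monomial_one_eq_sum, ← Finset.add_sum_erase _ _ ht.1, add_sub_cancel_right]
  refine (Submodule.smul_mem_iff V (mem_support_iff.1 ht.1)).1 ?_
  rw [hlead]
  refine V.sub_mem (hmul i ?_) (V.sum_mem fun s hs => V.smul_mem _ (hrest s hs))
  rw [← hj, map_add, htd, add_comm]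

theorem span_mul_monomial_eq_inf_homogeneousSubmodule [Finite σ] {o : MonomialOrdering σ}
    {F₁ F₂ : MvPolynomial σ k} {d m : ℕ} (h₁ : F₁.IsHomogeneous d) (h₂ : F₂.IsHomogeneous d)
    (hdm : d ≤ m) {t : σ →₀ ℕ} (ht : IsTrailingMonomial o F₂ t) :
    Submodule.span k ((F₁ * monomial · 1) '' {j | j.degree = m - d ∧ ¬ t ≤ j} ∪
        (F₂ * monomial · 1) '' {j | j.degree = m - d}) =
      (Ideal.span {F₁, F₂}).restrictScalars k ⊓ homogeneousSubmodule σ k m := by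
  have hH : homogeneousSubmodule σ k (m - d) = restrictSupport k {j | j.degree = m - d} :=
    homogeneousSubmodule_eq_finsupp_supported σ k (m - d)
  rw [restrictScalars_span_pair_inf_homogeneousSubmodule h₁ h₂ hdm, Submodule.span_union,
    span_image_mul_monomial F₂, ← hH]
  refine le_antisymm (sup_le_sup_right ?_ _) (sup_le ?_ le_sup_right)
  · rw [span_image_mul_monomial, hH]
    exact Submodule.map_mono (restrictSupport_mono k fun j hj => hj.1)
  set V := Submodule.span k ((F₁ * monomial · 1) '' {j | j.degree = m - d ∧ ¬ t ≤ j}) ⊔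
    (homogeneousSubmodule σ k (m - d)).map (LinearMap.mulLeft k F₂)
  rw [Submodule.map_le_iff_le_comap, hH, restrictSupport_eq_span, Submodule.span_le]
  rintro _ ⟨j, hj, rfl⟩
  refine monomial_mem_of_isTrailingMonomial h₂ ht (V.comap (LinearMap.mulLeft k F₁))
    (fun i hi => ?_) (fun j hj htj => ?_) hj
  · rw [Submodule.mem_comap, LinearMap.mulLeft_apply, mul_left_comm]
    exact Submodule.mem_sup_right ⟨F₁ * monomial i 1,
      hi ▸ add_comm d _ ▸ h₁.mul (isHomogeneous_monomial 1 rfl), rfl⟩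
  · exact Submodule.mem_sup_left (Submodule.subset_span ⟨j, ⟨hj, htj⟩, rfl⟩)

end Field

/-- Let `F₁, F₂` be coprime homogeneous polynomials of degree `d` over a field `k`, fix a
monomial ordering, let `m ≥ 2d`, and let `TM(F₂) = t` be the trailing monomial of `F₂`.
With `B₁ = {F₁·xⁱ : |i| = m−d}`, `B₂ = {F₂·xⁱ : |i| = m−d}`,
`B₁' = {F₁·TM(F₂)·xⁱ : |i| = m−2d}`, the set `B = (B₁ \ B₁') ∪ B₂` is a `k`-basis of
the degree-`m` homogeneous part `(F₁,F₂)ₘ` of the ideal `(F₁,F₂)`. -/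
theorem stmt3 {k : Type*} [Field k] (n d m : ℕ) (hd : 0 < d) (hm : 2 * d ≤ m)
    (o : MonomialOrdering (Fin (n + 1)))
    (F₁ F₂ : MvPolynomial (Fin (n + 1)) k)
    (h₁ : F₁.IsHomogeneous d) (h₂ : F₂.IsHomogeneous d)
    (hcop : ∀ p : MvPolynomial (Fin (n + 1)) k, p ∣ F₁ → p ∣ F₂ → IsUnit p)
    (t : Fin (n + 1) →₀ ℕ) (ht : IsTrailingMonomial o F₂ t)
    (B₁ B₂ B₁' : Set (MvPolynomial (Fin (n + 1)) k))
    (hB₁ : B₁ = {P | ∃ i : Fin (n + 1) →₀ ℕ,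
      (i.sum fun _ e => e) = m - d ∧ P = F₁ * monomial i 1})
    (hB₂ : B₂ = {P | ∃ i : Fin (n + 1) →₀ ℕ,
      (i.sum fun _ e => e) = m - d ∧ P = F₂ * monomial i 1})
    (hB₁' : B₁' = {P | ∃ i : Fin (n + 1) →₀ ℕ,
      (i.sum fun _ e => e) = m - 2 * d ∧ P = F₁ * monomial t 1 * monomial i 1}) :
    LinearIndependent k ((↑) : ((B₁ \ B₁') ∪ B₂ : Set (MvPolynomial (Fin (n + 1)) k)) →
        MvPolynomial (Fin (n + 1)) k) ∧
      Submodule.span k ((B₁ \ B₁') ∪ B₂) =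
        (Ideal.span {F₁, F₂}).restrictScalars k ⊓
          MvPolynomial.homogeneousSubmodule (Fin (n + 1)) k m := by
  have hF₁ : F₁ ≠ 0 := by
    rintro rfl
    exact h₂.not_isUnit hd (hcop F₂ (dvd_zero F₂) dvd_rfl)
  have htd : t.degree = d := h₂.degree_eq_of_mem_support ht.1
  have hsum (i : Fin (n + 1) →₀ ℕ) : (i.sum fun _ e => e) = i.degree := rfl
  have hB₁B₁' : B₁ \ B₁' = (F₁ * monomial · 1) '' {j | j.degree = m - d ∧ ¬ t ≤ j} := by
    ext P
    simp only [hB₁, hB₁', hsum, mul_assoc, monomial_mul, one_mul]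
    constructor
    · rintro ⟨⟨j, hj, rfl⟩, hP⟩
      refine ⟨j, ⟨hj, fun htj => hP ?_⟩, rfl⟩
      obtain ⟨i, rfl⟩ := le_iff_exists_add.1 htj
      exact ⟨i, by rw [map_add] at hj; omega, rfl⟩
    · rintro ⟨j, ⟨hj, htj⟩, rfl⟩
      refine ⟨⟨j, hj, rfl⟩, fun ⟨i, _, h⟩ => htj ?_⟩
      exact monomial_left_injective one_ne_zero (mul_left_cancel₀ hF₁ h) ▸ le_self_add
  have hB₂' : B₂ = (F₂ * monomial · 1) '' {j | j.degree = m - d} := by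
    rw [hB₂]
    exact Set.ext fun P => exists_congr fun i => and_congr Iff.rfl eq_comm
  rw [hB₁B₁', hB₂', span_mul_monomial_eq_inf_homogeneousSubmodule h₁ h₂ (by omega) ht]
  exact ⟨(linearIndepOn_mul_monomial hF₁ _).id_union
    (linearIndepOn_mul_monomial (support_nonempty.1 ⟨t, ht.1⟩) _)
    (disjoint_span_mul_monomial hcop ht (fun _ hj => hj.2) _), rfl⟩
end

section
/- Let ψ₁,…,ψ_M be entire functions and W their Wronskian (the determinant of the matrix of derivatives ψ_j^{(i)}, 0 ≤ i ≤ M−1). Then for every z ∈ ℂ, ord_z⁺(W) ≥ ∑_{j=1}^M ord_z⁺(ψ_j) − M(M−1)/2, where ord_z⁺ denotes the nonnegative part of the vanishing order at z. -/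
open MeasureTheory
open scoped Classical

noncomputable section

/-- The order of vanishing (negative for poles) of a meromorphic function at a point,
as an integer; junk value `0` if the function is not meromorphic there or has order `⊤`. -/
def mord (f : ℂ → ℂ) (z : ℂ) : ℤ :=
  if h : MeromorphicAt f z then (meromorphicOrderAt f z).untopD 0 else 0

/-- The nonnegative part of the vanishing order: `ord_z⁺(f) = max{0, ord_z(f)}`. -/
def ordPlus (f : ℂ → ℂ) (z : ℂ) : ℤ := max 0 (mord f z)

/-- The order of the pole: `ord_z⁻(f) = max{0, −ord_z(f)}`. -/
def ordMinus (f : ℂ → ℂ) (z : ℂ) : ℤ := max 0 (-(mord f z))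

/-- Integrated Nevanlinna counting function associated to a divisor `ν` on `ℂ`:
`N(ν,r) = ∑_{0<|z|≤r} ν(z)·log(r/|z|) + ν(0)·log r`. -/
def countN (ν : ℂ → ℤ) (r : ℝ) : ℝ :=
  (∑ᶠ z ∈ {z : ℂ | 0 < ‖z‖ ∧ ‖z‖ ≤ r},
    (ν z : ℝ) * Real.log (r / ‖z‖)) + (ν 0 : ℝ) * Real.log r

/-- The proximity function `m_f(∞,r) = ∫₀^{2π} log⁺|f(re^{iθ})| dθ/2π`. -/
def proxInf (f : ℂ → ℂ) (r : ℝ) : ℝ :=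
  (∫ θ in (0:ℝ)..(2 * Real.pi),
    max 0 (Real.log (‖f (r * Complex.exp (θ * Complex.I))‖))) / (2 * Real.pi)

/-- The Nevanlinna characteristic `T_f(r) = m_f(∞,r) + N_f(∞,r)`. -/
def nevT (f : ℂ → ℂ) (r : ℝ) : ℝ := proxInf f r + countN (ordMinus f) r

/-- The Cartan characteristic of a holomorphic curve to `ℙ^{m-1}` computed from a reduced
representation `h = (h₀,…,h_{m-1})`:
`T(r) = ∫₀^{2π} log max_i |h_i(re^{iθ})| dθ/2π`. -/
def cartanT {m : ℕ} (h : Fin m → ℂ → ℂ) (r : ℝ) : ℝ :=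
  (∫ θ in (0:ℝ)..(2 * Real.pi),
    Real.log ‖(fun i => h i (r * Complex.exp (θ * Complex.I)) : Fin m → ℂ)‖) / (2 * Real.pi)

/-- The gcd counting function: the counting function of common zeros of `f` and `g`,
each counted with the minimum of the two vanishing orders. -/
def Ngcd (f g : ℂ → ℂ) (r : ℝ) : ℝ :=
  countN (fun z => min (ordPlus f z) (ordPlus g z)) r

/-- The gcd proximity function
`m_gcd(f,g,r) = −∫₀^{2π} log⁻ max{|f(re^{iθ})|,|g(re^{iθ})|} dθ/2π`. -/
def mgcd (f g : ℂ → ℂ) (r : ℝ) : ℝ :=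
  -(∫ θ in (0:ℝ)..(2 * Real.pi),
      min 0 (Real.log (max (‖f (r * Complex.exp (θ * Complex.I))‖)
        (‖g (r * Complex.exp (θ * Complex.I))‖)))) / (2 * Real.pi)

end

/-!
Expand the Wronskian by the Leibniz formula. Differentiating `i` times lowers the order of
vanishing by at most `i`, so the term of a permutation `σ` vanishes at `z` to order at least
`∑ⱼ ord_z ψⱼ - ∑ᵢ σ i = ∑ⱼ ord_z ψⱼ - M(M-1)/2`. Since `W ≢ 0`, the identity theorem makes all
these orders finite, and then `ord_z⁺` is the analytic order.
-/

open Filter Finset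

section AnalyticOrder

variable {𝕜 E : Type*} [NontriviallyNormedField 𝕜] [NormedAddCommGroup E] [NormedSpace 𝕜 E]
  {z : 𝕜} {ι : Type*}

theorem le_analyticOrderAt_finset_sum {s : Finset ι} {F : ι → 𝕜 → E} {n : ℕ∞}
    (h : ∀ i ∈ s, n ≤ analyticOrderAt (F i) z) :
    n ≤ analyticOrderAt (fun w => ∑ i ∈ s, F i w) z := by
  induction s using Finset.cons_induction with
  | empty => simp [analyticOrderAt_eq_top.2 (Eventually.of_forall fun _ => rfl)]
  | cons a s ha ih =>
    simp only [Finset.sum_cons]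
    rw [forall_mem_cons] at h
    exact (le_min h.1 (ih h.2)).trans le_analyticOrderAt_add

theorem analyticOrderAt_finset_prod {s : Finset ι} {F : ι → 𝕜 → 𝕜}
    (h : ∀ i ∈ s, AnalyticAt 𝕜 (F i) z) :
    analyticOrderAt (fun w => ∏ i ∈ s, F i w) z = ∑ i ∈ s, analyticOrderAt (F i) z := by
  induction s using Finset.cons_induction with
  | empty => simp [analyticOrderAt_eq_zero]
  | cons a s ha ih =>
    rw [forall_mem_cons] at h
    simp only [Finset.prod_cons, Finset.sum_cons]
    rw [← ih h.2]
    exact analyticOrderAt_mul h.1 (Finset.analyticAt_fun_prod s h.2)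

variable [CompleteSpace E] {f : 𝕜 → E}

theorem AnalyticAt.analyticAt_iteratedDeriv (hf : AnalyticAt 𝕜 f z) (k : ℕ) :
    AnalyticAt 𝕜 (iteratedDeriv k f) z := by
  rw [iteratedDeriv_eq_iterate]
  exact hf.iterated_deriv k

variable [CharZero 𝕜]

theorem AnalyticAt.analyticOrderAt_le_deriv_add_one (hf : AnalyticAt 𝕜 f z) :
    analyticOrderAt f z ≤ analyticOrderAt (deriv f) z + 1 := by
  by_cases hfz : f z = 0
  · simpa [hfz] using hf.analyticOrderAt_deriv_add_one.ge
  · simp [analyticOrderAt_eq_zero.2 (Or.inr hfz)]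

theorem AnalyticAt.analyticOrderAt_le_iteratedDeriv_add (hf : AnalyticAt 𝕜 f z) (k : ℕ) :
    analyticOrderAt f z ≤ analyticOrderAt (iteratedDeriv k f) z + k := by
  induction k with
  | zero => simp
  | succ k ih =>
    calc analyticOrderAt f z ≤ analyticOrderAt (iteratedDeriv k f) z + k := ih
      _ ≤ analyticOrderAt (iteratedDeriv (k + 1) f) z + 1 + k := by
        rw [iteratedDeriv_succ]
        gcongr
        exact (hf.analyticAt_iteratedDeriv k).analyticOrderAt_le_deriv_add_one
      _ = analyticOrderAt (iteratedDeriv (k + 1) f) z + ↑(k + 1) := by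
        push_cast
        ring

end AnalyticOrder

theorem Fin.sum_univ_val_eq_choose_two (M : ℕ) : ∑ i : Fin M, (i : ℕ) = M.choose 2 := by
  rw [Fin.sum_univ_eq_sum_range (fun i => i), Finset.sum_range_id, Nat.choose_two_right]

theorem Int.natCast_choose_two (n : ℕ) : (n.choose 2 : ℤ) = n * (n - 1) / 2 := by
  have h : n.choose 2 * 2 = n * (n - 1) := by
    rw [Nat.choose_two_right, Nat.div_mul_cancel (Nat.even_mul_pred_self n).two_dvd]
  rcases n with _ | n
  · simp
  · rw [Nat.add_sub_cancel] at h
    have h' : ((n + 1 : ℕ) : ℤ) * ((n + 1 : ℕ) - 1) = (n + 1).choose 2 * 2 := by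
      push_cast
      rw [add_sub_cancel_right]
      exact_mod_cast h.symm
    rw [h', Int.mul_ediv_cancel _ two_ne_zero]

section Wronskian

variable {𝕜 : Type*} [NontriviallyNormedField 𝕜] {M : ℕ}

noncomputable def wronskian (ψ : Fin M → 𝕜 → 𝕜) (z : 𝕜) : 𝕜 :=
  (Matrix.of fun i j : Fin M => iteratedDeriv i (ψ j) z).det

theorem wronskian_eq_sum_perm (ψ : Fin M → 𝕜 → 𝕜) :
    wronskian ψ = fun w => ∑ σ : Equiv.Perm (Fin M),
      ((Equiv.Perm.sign σ : ℤ) : 𝕜) * ∏ i, iteratedDeriv (σ i) (ψ i) w :=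
  funext fun _ => Matrix.det_apply' _

variable [CompleteSpace 𝕜] {ψ : Fin M → 𝕜 → 𝕜} {z : 𝕜}

theorem AnalyticAt.wronskian (hψ : ∀ j, AnalyticAt 𝕜 (ψ j) z) :
    AnalyticAt 𝕜 (wronskian ψ) z := by
  rw [wronskian_eq_sum_perm]
  exact Finset.analyticAt_fun_sum _ fun σ _ => analyticAt_const.mul
    (Finset.analyticAt_fun_prod _ fun i _ => (hψ i).analyticAt_iteratedDeriv _)

variable [CharZero 𝕜]

theorem sum_analyticOrderAt_sub_choose_two_le_analyticOrderAt_wronskian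
    (hψ : ∀ j, AnalyticAt 𝕜 (ψ j) z) :
    (∑ j, analyticOrderAt (ψ j) z) - M.choose 2 ≤ analyticOrderAt (wronskian ψ) z := by
  rw [wronskian_eq_sum_perm]
  refine le_analyticOrderAt_finset_sum fun σ _ => ?_
  have hderiv : ∀ i ∈ univ, AnalyticAt 𝕜 (iteratedDeriv (σ i) (ψ i)) z :=
    fun i _ => (hψ i).analyticAt_iteratedDeriv _
  calc (∑ j, analyticOrderAt (ψ j) z) - M.choose 2
      = (∑ i, analyticOrderAt (ψ i) z) - ∑ i, ((σ i : ℕ) : ℕ∞) := by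
        rw [Equiv.sum_comp σ (fun i => ((i : ℕ) : ℕ∞)), ← Nat.cast_sum,
          Fin.sum_univ_val_eq_choose_two]
    _ ≤ ∑ i, (analyticOrderAt (ψ i) z - σ i) := by
        rw [tsub_le_iff_right, ← sum_add_distrib]
        exact sum_le_sum fun i _ => le_tsub_add
    _ ≤ ∑ i, analyticOrderAt (iteratedDeriv (σ i) (ψ i)) z :=
        sum_le_sum fun i _ =>
          tsub_le_iff_right.2 ((hψ i).analyticOrderAt_le_iteratedDeriv_add _)
    _ = analyticOrderAt (fun w => ∏ i, iteratedDeriv (σ i) (ψ i) w) z :=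
        (analyticOrderAt_finset_prod hderiv).symm
    _ ≤ analyticOrderAt (fun _ => ((Equiv.Perm.sign σ : ℤ) : 𝕜)) z +
          analyticOrderAt (fun w => ∏ i, iteratedDeriv (σ i) (ψ i) w) z := le_add_self
    _ = _ := (analyticOrderAt_mul analyticAt_const (Finset.analyticAt_fun_prod _ hderiv)).symm

end Wronskian

theorem AnalyticAt.ordPlus_eq {f : ℂ → ℂ} {z : ℂ} (hf : AnalyticAt ℂ f z) :
    ordPlus f z = analyticOrderNatAt f z := by
  rw [ordPlus, mord, dif_pos hf.meromorphicAt, hf.meromorphicOrderAt_eq, analyticOrderNatAt]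
  cases analyticOrderAt f z with
  | top => simp
  | coe a => exact max_eq_right (Int.natCast_nonneg a)

theorem stmt18_general (M : ℕ) (ψ : Fin M → ℂ → ℂ)
    (hent : ∀ j, Differentiable ℂ (ψ j))
    (W : ℂ → ℂ)
    (hW : W = fun z => Matrix.det (Matrix.of fun i j : Fin M => iteratedDeriv (i : ℕ) (ψ j) z))
    (hW0 : ∃ z, W z ≠ 0) (z : ℂ) :
    (∑ j, ordPlus (ψ j) z) - (M : ℤ) * ((M : ℤ) - 1) / 2 ≤ ordPlus W z := by
  obtain rfl : W = wronskian ψ := hW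
  obtain ⟨w, hw⟩ := hW0
  have hψ : ∀ u j, AnalyticAt ℂ (ψ j) u := fun u j => (hent j).analyticAt u
  have hWz : analyticOrderAt (wronskian ψ) z ≠ ⊤ :=
    AnalyticOnNhd.analyticOrderAt_ne_top_of_isPreconnected
      (fun u _ => AnalyticAt.wronskian (hψ u)) isPreconnected_univ (Set.mem_univ w)
      (Set.mem_univ z) (by simp [analyticOrderAt_eq_zero.2 (Or.inr hw)])
  have key := sum_analyticOrderAt_sub_choose_two_le_analyticOrderAt_wronskian (hψ z)
  have hψz : ∀ j, analyticOrderAt (ψ j) z ≠ ⊤ := by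
    intro j hj
    refine hWz (top_le_iff.1 (le_trans ?_ key))
    rw [ENat.sum_eq_top.2 ⟨j, mem_univ j, hj⟩, ENat.top_sub_natCast]
  have hnat : ∑ j, analyticOrderNatAt (ψ j) z - M.choose 2 ≤
      analyticOrderNatAt (wronskian ψ) z := by
    rw [← ENat.natCast_le_natCast, ENat.natCast_sub, Nat.cast_sum]
    simpa only [Nat.cast_analyticOrderNatAt (hψz _), Nat.cast_analyticOrderNatAt hWz] using key
  simp only [(hψ z _).ordPlus_eq, (AnalyticAt.wronskian (hψ z)).ordPlus_eq,
    ← Int.natCast_choose_two, ← Nat.cast_sum]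
  omega

/-- Let `ψ₁,…,ψ_M` be entire functions, none identically zero, and let `W` be their
Wronskian, assumed not identically zero. Then for every `z ∈ ℂ`,
`ord_z⁺(W) ≥ ∑ⱼ ord_z⁺(ψⱼ) − M(M−1)/2`. -/
theorem stmt18 (M : ℕ) (ψ : Fin M → ℂ → ℂ)
    (hent : ∀ j, Differentiable ℂ (ψ j))
    (hne : ∀ j, ∃ z, ψ j z ≠ 0)
    (W : ℂ → ℂ)
    (hW : W = fun z => Matrix.det (Matrix.of fun i j : Fin M => iteratedDeriv (i : ℕ) (ψ j) z))
    (hW0 : ∃ z, W z ≠ 0) (z : ℂ) :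
    (∑ j, ordPlus (ψ j) z) - (M : ℤ) * ((M : ℤ) - 1) / 2 ≤ ordPlus W z :=
  stmt18_general M ψ hent W hW hW0 z
end

section
/- Let g(z) = exp(2πiz) and f(z) = exp(2πi·p(z)) where p ∈ ℤ[x] has degree at least 2. Then g−1 divides f−1 in the ring of entire functions (i.e., (f−1)/(g−1) extends to an entire function), while f and g are algebraically independent over ℂ. -/
/-!
At an integer `n` both `exp (2πi p(z)) - 1` and `exp (2πiz) - 1` vanish, the latter simply, so
their quotient has a removable singularity there.

For algebraic independence, fix `w` transcendental. Along `w + ℤ` the function `g` is constant,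
equal to `b = exp (2πiw)`, while the values `f (w + n)` are pairwise distinct: `p (w + m) - p (w + n)`
is a nonconstant integer polynomial in `w` because `deg p ≥ 2`, so it is not an integer. Hence an
annihilating polynomial `Q` has `Q(·, b)` with infinitely many roots, for each of the uncountably
many such `b`, which forces `Q = 0`.
-/

open Complex Polynomial Topology
open scoped Real

theorem Differentiable.dslope {E : Type*} [NormedAddCommGroup E] [NormedSpace ℂ E]
    [CompleteSpace E] {F : ℂ → E} (hF : Differentiable ℂ F) (a : ℂ) :
    Differentiable ℂ (dslope F a) := by
  simpa only [differentiableOn_univ] using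
    (Complex.differentiableOn_dslope Filter.univ_mem).mpr hF.differentiableOn

/-- Near a simple zero `z₀` of `G`, the quotient `F / G` agrees off `z₀` with
`dslope F z₀ / dslope G z₀`, whose denominator does not vanish at `z₀`. -/
theorem exists_differentiable_eq_mul_of_simple_zeros {F G : ℂ → ℂ} (hF : Differentiable ℂ F)
    (hG : Differentiable ℂ G) (hzero : ∀ z, G z = 0 → F z = 0)
    (hsimple : ∀ z, G z = 0 → deriv G z ≠ 0) :
    ∃ q : ℂ → ℂ, Differentiable ℂ q ∧ ∀ z, F z = q z * G z := by
  classical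
  set q : ℂ → ℂ := fun z => if G z = 0 then deriv F z / deriv G z else F z / G z
  refine ⟨q, fun z₀ => ?_, fun z => ?_⟩
  · by_cases hz₀ : G z₀ = 0
    · have hdG : dslope G z₀ z₀ ≠ 0 := by rw [dslope_same]; exact hsimple z₀ hz₀
      have hnear : ∀ᶠ z in 𝓝 z₀, dslope G z₀ z ≠ 0 :=
        (hG.dslope z₀).continuous.continuousAt.eventually_ne hdG
      refine ((hF.dslope z₀ z₀).div (hG.dslope z₀ z₀) hdG).congr_of_eventuallyEq ?_
      filter_upwards [hnear] with z hz
      rcases eq_or_ne z z₀ with rfl | hne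
      · simp [q, hz₀, dslope_same]
      have hGz : G z = (z - z₀) * dslope G z₀ z := by
        simpa [hz₀] using (sub_smul_dslope G z₀ z).symm
      have hFz : F z = (z - z₀) * dslope F z₀ z := by
        simpa [hzero z₀ hz₀] using (sub_smul_dslope F z₀ z).symm
      have hGz₀ : G z ≠ 0 := by rw [hGz]; exact mul_ne_zero (sub_ne_zero.mpr hne) hz
      simp only [q, if_neg hGz₀, hFz, hGz, Pi.div_apply]
      exact mul_div_mul_left _ _ (sub_ne_zero.mpr hne)
    · have hnear : ∀ᶠ z in 𝓝 z₀, G z ≠ 0 := hG.continuous.continuousAt.eventually_ne hz₀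
      refine ((hF z₀).div (hG z₀) hz₀).congr_of_eventuallyEq ?_
      filter_upwards [hnear] with z hz
      simp [q, hz]
  · by_cases hz : G z = 0
    · simp [hz, hzero z hz]
    · simp [q, hz]

theorem exp_two_pi_I_mul_eq_exp_two_pi_I_mul_iff {x y : ℂ} :
    exp (2 * π * I * x) = exp (2 * π * I * y) ↔ ∃ k : ℤ, x = y + k := by
  have hc : 2 * (π : ℂ) * I ≠ 0 := by simp [Real.pi_ne_zero, I_ne_zero]
  rw [exp_eq_exp_iff_exists_int]
  refine exists_congr fun k => ⟨fun h => mul_left_cancel₀ hc ?_, fun h => ?_⟩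
  · linear_combination h
  · rw [h]; ring

theorem exp_two_pi_I_mul_eq_one_iff {x : ℂ} : exp (2 * π * I * x) = 1 ↔ ∃ k : ℤ, x = k := by
  simpa using exp_two_pi_I_mul_eq_exp_two_pi_I_mul_iff (y := 0)

theorem exists_differentiable_exp_two_pi_I_mul_aeval_sub_one_eq_mul (p : ℤ[X]) :
    ∃ q : ℂ → ℂ, Differentiable ℂ q ∧
      ∀ z, exp (2 * π * I * aeval z p) - 1 = q z * (exp (2 * π * I * z) - 1) := by
  refine exists_differentiable_eq_mul_of_simple_zeros
    (((Polynomial.differentiable_aeval p).const_mul _).cexp.sub_const 1)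
    ((differentiable_id.const_mul _).cexp.sub_const 1) (fun z hz => ?_) (fun z _ => ?_)
  · obtain ⟨n, rfl⟩ := exp_two_pi_I_mul_eq_one_iff.mp (sub_eq_zero.mp hz)
    rw [sub_eq_zero, exp_two_pi_I_mul_eq_one_iff]
    exact ⟨p.eval n, by simpa using aeval_algebraMap_apply_eq_algebraMap_eval (A := ℂ) n p⟩
  · rw [(((hasDerivAt_id' z).const_mul _).cexp.sub_const 1).deriv]
    simp [Real.pi_ne_zero, I_ne_zero, exp_ne_zero]

theorem Polynomial.coeff_taylor_natDegree_sub_one {R : Type*} [CommSemiring R]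
    [IsAddTorsionFree R] (p : R[X]) (r : R) :
    (taylor r p).coeff (p.natDegree - 1) =
      p.natDegree * p.leadingCoeff * r + p.coeff (p.natDegree - 1) := by
  rcases Nat.eq_zero_or_pos p.natDegree with hd | hd
  · rw [hd, taylor_coeff_zero, eq_C_of_natDegree_eq_zero hd]
    simp
  have hdeg : (hasseDeriv (p.natDegree - 1) p).natDegree ≤ 1 := by
    rw [natDegree_hasseDeriv]; omega
  rw [taylor_coeff, eq_X_add_C_of_natDegree_le_one hdeg]
  simp only [eval_add, eval_mul, eval_C, eval_X, hasseDeriv_coeff, zero_add,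
    Nat.choose_self, Nat.cast_one, one_mul, leadingCoeff]
  rw [show 1 + (p.natDegree - 1) = p.natDegree by omega,
    Nat.choose_symm_of_eq_add (show p.natDegree = (p.natDegree - 1) + 1 by omega),
    Nat.choose_one_right]

theorem Polynomial.taylor_sub_taylor_ne_C {R : Type*} [CommRing R] [IsDomain R] [CharZero R]
    {p : R[X]} (hp : 2 ≤ p.natDegree) {m n : R} (hmn : m ≠ n) (k : R) :
    taylor m p - taylor n p ≠ C k := by
  intro h
  have hcoeff := congr_arg (coeff · (p.natDegree - 1)) h
  simp only [coeff_sub, coeff_taylor_natDegree_sub_one, coeff_C,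
    if_neg (show p.natDegree - 1 ≠ 0 by omega)] at hcoeff
  have hp₀ : p ≠ 0 := by rintro rfl; simp at hp
  have : (p.natDegree : R) * p.leadingCoeff * (m - n) = 0 := by linear_combination hcoeff
  simp [sub_eq_zero, hmn, leadingCoeff_ne_zero.mpr hp₀] at this
  omega

theorem injective_exp_two_pi_I_mul_aeval_add_intCast {p : ℤ[X]} (hp : 2 ≤ p.natDegree) {w : ℂ}
    (hw : Transcendental ℤ w) :
    Function.Injective fun n : ℤ => exp (2 * π * I * aeval (w + n) p) := by
  intro m n hmn
  obtain ⟨k, hk⟩ := exp_two_pi_I_mul_eq_exp_two_pi_I_mul_iff.mp hmn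
  by_contra hne
  refine hw ⟨taylor m p - taylor n p - C k, sub_ne_zero.mpr (taylor_sub_taylor_ne_C hp hne k), ?_⟩
  simp only [map_sub, taylor_apply, aeval_comp, aeval_C]
  simp [hk]

theorem infinite_setOf_exp_two_pi_I_mul_transcendental :
    {b : ℂ | ∃ w, Transcendental ℤ w ∧ exp (2 * π * I * w) = b}.Infinite := by
  have hc : 2 * (π : ℂ) * I ≠ 0 := by simp [Real.pi_ne_zero, I_ne_zero]
  have hcount : ({0} ∪ (fun w : ℂ => exp (2 * π * I * w)) '' {w | IsAlgebraic ℤ w}).Countable :=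
    (Set.countable_singleton 0).union ((Algebraic.countable ℤ ℂ).image _)
  refine fun hfin => not_countable_complex <| (hfin.countable.union hcount).mono fun b _ => ?_
  by_cases hb : b = 0
  · simp [hb]
  have hlog : exp (2 * π * I * (log b / (2 * π * I))) = b := by
    rw [mul_div_cancel₀ _ hc, exp_log hb]
  by_cases hw : Transcendental ℤ (log b / (2 * π * I))
  · exact Or.inl ⟨_, hw, hlog⟩
  · exact Or.inr (Or.inr ⟨_, not_not.mp hw, hlog⟩)

theorem MvPolynomial.eval_aeval_X_C {R : Type*} [CommSemiring R] (Q : MvPolynomial (Fin 2) R)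
    (a b : R) :
    (aeval ![Polynomial.X, Polynomial.C b] Q).eval a = MvPolynomial.eval ![a, b] Q := by
  rw [← Polynomial.coe_aeval_eq_eval, comp_aeval_apply, aeval_eq_eval]
  congr 2
  funext i
  fin_cases i <;> simp

theorem MvPolynomial.eq_zero_of_infinite_setOf_eval_eq_zero {R : Type*} [CommRing R] [IsDomain R]
    (Q : MvPolynomial (Fin 2) R) {B : Set R} (hB : B.Infinite)
    (h : ∀ b ∈ B, {a | MvPolynomial.eval ![a, b] Q = 0}.Infinite) : Q = 0 := by
  refine funext_set ![Set.univ, B] (fun i => ?_) fun x hx => ?_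
  · fin_cases i
    exacts [hB.mono (Set.subset_univ B), hB]
  have hline : aeval ![Polynomial.X, Polynomial.C (x 1)] Q = 0 :=
    Polynomial.eq_zero_of_infinite_isRoot _ <| by
      simpa only [Polynomial.IsRoot, eval_aeval_X_C] using h (x 1) (hx 1 trivial)
  have hx : ![x 0, x 1] = x := by ext i; fin_cases i <;> rfl
  simpa [eval_aeval_X_C, hx] using congr_arg (Polynomial.eval (x 0)) hline

theorem MvPolynomial.aeval_pi_apply {ι X R : Type*} [CommSemiring R] (x : ι → X → R)
    (Q : MvPolynomial ι R) (z : X) : aeval x Q z = MvPolynomial.eval (fun i => x i z) Q :=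
  comp_aeval_apply x (Pi.evalAlgHom R (fun _ => R) z) Q

theorem algebraicIndependent_exp_two_pi_I_mul_aeval {p : ℤ[X]} (hp : 2 ≤ p.natDegree) :
    AlgebraicIndependent ℂ
      ![fun z : ℂ => exp (2 * π * I * aeval z p), fun z => exp (2 * π * I * z)] := by
  refine algebraicIndependent_iff.mpr fun Q hQ => ?_
  have hQz (z : ℂ) :
      MvPolynomial.eval ![exp (2 * π * I * aeval z p), exp (2 * π * I * z)] Q = 0 := by
    have h := congr_fun hQ z
    rw [MvPolynomial.aeval_pi_apply, Pi.zero_apply] at h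
    rw [← h]
    congr 2
    funext i
    fin_cases i <;> rfl
  refine MvPolynomial.eq_zero_of_infinite_setOf_eval_eq_zero Q
    infinite_setOf_exp_two_pi_I_mul_transcendental ?_
  rintro _ ⟨w, hw, rfl⟩
  refine Set.infinite_of_injective_forall_mem
    (injective_exp_two_pi_I_mul_aeval_add_intCast hp hw) fun n => ?_
  have hperiodic : exp (2 * π * I * (w + n)) = exp (2 * π * I * w) :=
    exp_two_pi_I_mul_eq_exp_two_pi_I_mul_iff.mpr ⟨n, rfl⟩
  simpa [hperiodic] using hQz (w + n)

/-- Let `g(z) = exp(2πiz)` and `f(z) = exp(2πi·p(z))` with `p ∈ ℤ[x]` of degree at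
least `2`. Then `g − 1` divides `f − 1` in the ring of entire functions, while `f` and
`g` are algebraically independent over `ℂ`. -/
theorem stmt19 (p : Polynomial ℤ) (hp : 2 ≤ p.natDegree) (f g : ℂ → ℂ)
    (hg : g = fun z => Complex.exp (2 * (Real.pi : ℂ) * Complex.I * z))
    (hf : f = fun z => Complex.exp (2 * (Real.pi : ℂ) * Complex.I * (Polynomial.aeval z p))) :
    (∃ q : ℂ → ℂ, Differentiable ℂ q ∧ ∀ z, f z - 1 = q z * (g z - 1)) ∧
      AlgebraicIndependent ℂ ![f, g] := by
  subst hf hg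
  exact ⟨exists_differentiable_exp_two_pi_I_mul_aeval_sub_one_eq_mul p,
    algebraicIndependent_exp_two_pi_I_mul_aeval hp⟩
end
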